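/- arXiv:2405.19554 — 5 statements merged into one kernel-verified Lean document; each statement's English description precedes it below -/
import Mathlib

section
/- With ε_i(t) = (μτ/|Ω|)∫_Ω k_i |∇v_i|² dx and e = k₁ − k₂, the difference term satisfies (ε₁ − ε₂)·e ≤ (3μτ/4)∫_Ω k₁|∇φ|² dx + a(t) e², where φ = v₁ − v₂ and a(t) = μτ( (1/2)∫_Ω k₁|∇v₁|²dx + ‖∇v₁‖‖∇v₂‖ + ‖∇φ‖‖∇v₂‖ + ∫_Ω k₁|∇v₂|²dx ). -/
/-!
With `φ = g₁ - g₂` and `e = k₁ - k₂`, the difference of the dissipation rates splits as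
`k₁ ‖g₁‖² - k₂ ‖g₂‖² = k₁ ⟪g₁, φ⟫ + e ⟪g₁, g₂⟫ + k₂ ⟪g₂, φ⟫`. Multiplying by `e` and writing
`k₂ = k₁ - e`, the two terms carrying `k₁ e` are absorbed into `k₁ ‖φ‖²` by Young's inequality
with weights `1/2` and `1/4`, and the two terms carrying `e²` are bounded by Cauchy–Schwarz.
-/

open scoped RealInnerProductSpace

theorem mul_le_mul_sq_add_sq_div_four_mul {ε : ℝ} (hε : 0 < ε) (a b : ℝ) :
    a * b ≤ ε * b ^ 2 + a ^ 2 / (4 * ε) := by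
  have hsq : 0 ≤ (a - 2 * ε * b) ^ 2 / (4 * ε) := by positivity
  have expand : (a - 2 * ε * b) ^ 2 / (4 * ε) = ε * b ^ 2 + a ^ 2 / (4 * ε) - a * b := by
    field_simp
    ring
  linarith

section InnerProductSpace

variable {F : Type*} [SeminormedAddCommGroup F] [InnerProductSpace ℝ F]

theorem real_inner_mul_le_young {ε : ℝ} (hε : 0 < ε) (x y : F) (t : ℝ) :
    ⟪x, y⟫ * t ≤ ε * ‖y‖ ^ 2 + ‖x‖ ^ 2 * t ^ 2 / (4 * ε) :=
  calc ⟪x, y⟫ * t = ⟪t • x, y⟫ := by rw [real_inner_smul_left, mul_comm]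
    _ ≤ ‖t • x‖ * ‖y‖ := real_inner_le_norm _ _
    _ ≤ ε * ‖y‖ ^ 2 + ‖t • x‖ ^ 2 / (4 * ε) := mul_le_mul_sq_add_sq_div_four_mul hε _ _
    _ = ε * ‖y‖ ^ 2 + ‖x‖ ^ 2 * t ^ 2 / (4 * ε) := by
      rw [norm_smul, mul_pow, Real.norm_eq_abs, sq_abs, mul_comm (t ^ 2)]

theorem mul_norm_sq_sub_mul_norm_sq_eq (k₁ k₂ : ℝ) (g₁ g₂ : F) :
    k₁ * ‖g₁‖ ^ 2 - k₂ * ‖g₂‖ ^ 2 =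
      k₁ * ⟪g₁, g₁ - g₂⟫ + (k₁ - k₂) * ⟪g₁, g₂⟫ + k₂ * ⟪g₂, g₁ - g₂⟫ := by
  simp only [inner_sub_right, real_inner_self_eq_norm_sq, real_inner_comm g₂ g₁]
  ring

end InnerProductSpace

/-- `g₁, g₂` stand for the gradients `∇v₁, ∇v₂` in `L²(Ω)` with `|Ω| = 1`, so that
`ε_i = μτ k_i ‖g_i‖²` and `∇φ = g₁ - g₂`. -/
theorem dissipation_difference_bound {H : Type*} [NormedAddCommGroup H]
    [InnerProductSpace ℝ H] (μ τ : ℝ) (hμ : 0 < μ) (hτ : 0 < τ)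
    (k₁ k₂ : ℝ) (hk₁ : 0 ≤ k₁) (g₁ g₂ : H) :
    (μ * τ * k₁ * ‖g₁‖ ^ 2 - μ * τ * k₂ * ‖g₂‖ ^ 2) * (k₁ - k₂) ≤
      3 * μ * τ / 4 * (k₁ * ‖g₁ - g₂‖ ^ 2) +
        (μ * τ * (1 / 2 * (k₁ * ‖g₁‖ ^ 2) + ‖g₁‖ * ‖g₂‖ + ‖g₁ - g₂‖ * ‖g₂‖ +
          k₁ * ‖g₂‖ ^ 2)) * (k₁ - k₂) ^ 2 := by
  set e := k₁ - k₂
  have hdecomp := mul_norm_sq_sub_mul_norm_sq_eq k₁ k₂ g₁ g₂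
  have hk₂ : k₂ = k₁ - e := by ring
  have young₁ := real_inner_mul_le_young (by norm_num : (0 : ℝ) < 1 / 2) g₁ (g₁ - g₂) e
  have young₂ := real_inner_mul_le_young (by norm_num : (0 : ℝ) < 1 / 4) g₂ (g₁ - g₂) e
  have cs₁ : ⟪g₁, g₂⟫ ≤ ‖g₁‖ * ‖g₂‖ := real_inner_le_norm g₁ g₂
  have cs₂ : -⟪g₂, g₁ - g₂⟫ ≤ ‖g₁ - g₂‖ * ‖g₂‖ := by
    rw [mul_comm]; exact neg_le.mp (neg_le_of_abs_le (abs_real_inner_le_norm g₂ (g₁ - g₂)))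
  have unscaled : (k₁ * ‖g₁‖ ^ 2 - k₂ * ‖g₂‖ ^ 2) * e ≤
      3 / 4 * (k₁ * ‖g₁ - g₂‖ ^ 2) +
        (1 / 2 * (k₁ * ‖g₁‖ ^ 2) + ‖g₁‖ * ‖g₂‖ + ‖g₁ - g₂‖ * ‖g₂‖ + k₁ * ‖g₂‖ ^ 2) * e ^ 2 := by
    rw [hdecomp, hk₂]
    linear_combination k₁ * young₁ + k₁ * young₂ + e ^ 2 * cs₁ + e ^ 2 * cs₂
  linear_combination (μ * τ) * unscaled
end

section
/- For the semi-discrete finite element approximation (v_h, k_h) there holds the energy equality d/dt[(1/(2|Ω|))‖v_h(t)‖² + k_h(t)] + (ν/|Ω|)‖∇v_h(t)‖² + (√2/2)τ⁻¹k_h(t) = (1/|Ω|)(f, v_h(t)). -/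
open RealInnerProductSpace

/- Testing the momentum equation with `v_h` itself kills the convective term (skew-symmetry) and
leaves the kinetic energy balance `d/dt ½‖v_h‖² = (f, v_h) - (ν + μτk_h)‖∇v_h‖²`. The eddy
viscosity part `μτk_h‖∇v_h‖²` of this dissipation is exactly the production term of the
`k_h`-equation, so it cancels once `1/|Ω|` times the kinetic balance is added to the `k_h`-equation. -/

theorem hasDerivAt_half_norm_sq_of_galerkin {Vh H : Type*} [NormedAddCommGroup Vh]
    [InnerProductSpace ℝ Vh] [NormedAddCommGroup H] [InnerProductSpace ℝ H]
    (Grad : Vh → H) {b : Vh → Vh → Vh → ℝ} {κ t : ℝ} {f v' : Vh} {v : ℝ → Vh}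
    (hb : b (v t) (v t) (v t) = 0) (hv : HasDerivAt v v' t)
    (hmom : ⟪v', v t⟫ + κ * ⟪Grad (v t), Grad (v t)⟫ + b (v t) (v t) (v t) = ⟪f, v t⟫) :
    HasDerivAt (fun s => ‖v s‖ ^ 2 / 2) (⟪f, v t⟫ - κ * ‖Grad (v t)‖ ^ 2) t := by
  have hbalance : ⟪v t, v'⟫ = ⟪f, v t⟫ - κ * ‖Grad (v t)‖ ^ 2 := by
    rw [hb, real_inner_self_eq_norm_sq] at hmom
    rw [real_inner_comm]
    linarith
  refine (hv.norm_sq.div_const 2).congr_deriv ?_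
  rw [hbalance]
  ring

theorem semidiscrete_energy_equality_general {Vh H : Type*} [NormedAddCommGroup Vh]
    [InnerProductSpace ℝ Vh] [NormedAddCommGroup H] [InnerProductSpace ℝ H]
    (Grad : Vh →ₗ[ℝ] H) (b : Vh → Vh → Vh → ℝ)
    (hskew : ∀ u w : Vh, b u w w = 0)
    (ν μ τ Ωm : ℝ)
    (f : Vh) (vh : ℝ → Vh) (vh' : ℝ → Vh) (kh : ℝ → ℝ)
    (hvh : ∀ t, HasDerivAt vh (vh' t) t)
    (hmomentum : ∀ t, ∀ wh : Vh,
      ⟪vh' t, wh⟫ + (ν + μ * τ * kh t) * ⟪Grad (vh t), Grad wh⟫ +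
        b (vh t) (vh t) wh = ⟪f, wh⟫)
    (hkeq : ∀ t, HasDerivAt kh
      ((1 / Ωm) * (μ * τ * kh t * ‖Grad (vh t)‖ ^ 2) -
        Real.sqrt 2 / 2 * τ⁻¹ * kh t) t) :
    ∀ t, HasDerivAt (fun s => 1 / (2 * Ωm) * ‖vh s‖ ^ 2 + kh s)
      ((1 / Ωm) * ⟪f, vh t⟫ - ν / Ωm * ‖Grad (vh t)‖ ^ 2 -
        Real.sqrt 2 / 2 * τ⁻¹ * kh t) t := by
  intro t
  have hkinetic := hasDerivAt_half_norm_sq_of_galerkin Grad (hskew _ _) (hvh t)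
    (hmomentum t (vh t))
  have htotal := (hkinetic.const_mul (1 / Ωm)).add (hkeq t)
  have henergy : (fun s => 1 / (2 * Ωm) * ‖vh s‖ ^ 2 + kh s) =
      (fun s => 1 / Ωm * (‖vh s‖ ^ 2 / 2)) + kh := by
    funext s
    simp only [Pi.add_apply]
    ring
  rw [henergy]
  exact htotal.congr_deriv (by ring)

/-- Energy equality for the semi-discrete approximation of the 1/2-equation
model. `Vh` is the (divergence-free) finite element space with the `L²` inner
product, `Grad : Vh →ₗ H` is the gradient operator into the `L²` space of
gradients (so `‖Grad w‖² = ‖∇w‖²`), `b` is the skew-symmetric trilinear form,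
`Ωm = |Ω|`, and `(v_h, k_h)` solves the semi-discrete scheme. The conclusion is
`d/dt[(1/(2|Ω|))‖v_h‖² + k_h] + (ν/|Ω|)‖∇v_h‖² + (√2/2)τ⁻¹k_h = (1/|Ω|)(f, v_h)`. -/
theorem semidiscrete_energy_equality {Vh H : Type*} [NormedAddCommGroup Vh]
    [InnerProductSpace ℝ Vh] [NormedAddCommGroup H] [InnerProductSpace ℝ H]
    (Grad : Vh →ₗ[ℝ] H) (b : Vh → Vh → Vh → ℝ)
    (hskew : ∀ u w : Vh, b u w w = 0)
    (ν μ τ Ωm : ℝ) (hν : 0 < ν) (hμ : 0 < μ) (hτ : 0 < τ) (hΩm : 0 < Ωm)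
    (f : Vh) (vh : ℝ → Vh) (vh' : ℝ → Vh) (kh : ℝ → ℝ)
    (hvh : ∀ t, HasDerivAt vh (vh' t) t)
    (hmomentum : ∀ t, ∀ wh : Vh,
      ⟪vh' t, wh⟫ + (ν + μ * τ * kh t) * ⟪Grad (vh t), Grad wh⟫ +
        b (vh t) (vh t) wh = ⟪f, wh⟫)
    (hkeq : ∀ t, HasDerivAt kh
      ((1 / Ωm) * (μ * τ * kh t * ‖Grad (vh t)‖ ^ 2) -
        Real.sqrt 2 / 2 * τ⁻¹ * kh t) t) :
    ∀ t, HasDerivAt (fun s => 1 / (2 * Ωm) * ‖vh s‖ ^ 2 + kh s)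
      ((1 / Ωm) * ⟪f, vh t⟫ - ν / Ωm * ‖Grad (vh t)‖ ^ 2 -
        Real.sqrt 2 / 2 * τ⁻¹ * kh t) t :=
  semidiscrete_energy_equality_general Grad b hskew ν μ τ Ωm f vh vh' kh hvh hmomentum hkeq
end

section
/- The semi-discrete approximation satisfies, uniformly in T: (1/2)‖v_h(T)‖² + |Ω|k_h(T) ≤ C and (1/T)∫_0^T (ν‖∇v_h‖² + (√2/2)τ⁻¹|Ω|k_h(t)) dt ≤ C, where C depends only on f, v_h(0), k_h(0), ν (not on T). -/
open RealInnerProductSpace MeasureTheory Set Filter Topology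

/-!
Testing the momentum equation with `v_h` itself kills the convective term, and the
turbulent-viscosity term `μ τ k_h ‖∇v_h‖²` cancels against the production term of the
`k`-equation, so the energy `E = ½‖v_h‖² + |Ω| k_h` obeys `E' = (f, v_h) − D`, with `D` the
dissipation `ν‖∇v_h‖² + (√2/2) τ⁻¹ |Ω| k_h`. Young and Poincaré give `(f, v_h) ≤ K + D/2`,
and Poincaré again `α E ≤ D/2`. Hence `E' ≤ K − α E`, which bounds `E` uniformly in time,
and `D ≤ 2K − 2E'`, which after integration bounds the time average of `D` by
`2K + 2(E(0) − E(T))/T`; for small `T` the last quotient stays bounded because `E` is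
differentiable at `0`.
-/

theorem le_max_of_hasDerivAt_le_sub_mul {E E' : ℝ → ℝ} {K α a T : ℝ} (hα : 0 < α)
    (hE : ∀ t, HasDerivAt E (E' t) t) (hdecay : ∀ t, E' t ≤ K - α * E t) (haT : a ≤ T) :
    E T ≤ max (E a) (K / α) := by
  set F : ℝ → ℝ := fun t => (E t - K / α) * Real.exp (α * (t - a))
  have hF : ∀ t, HasDerivAt F ((E' t + α * E t - K) * Real.exp (α * (t - a))) t := by
    intro t
    have hexp : HasDerivAt (fun u => Real.exp (α * (u - a))) (Real.exp (α * (t - a)) * α) t := by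
      simpa using (((hasDerivAt_id t).sub_const a).const_mul α).exp
    refine (((hE t).sub_const (K / α)).mul hexp).congr_deriv ?_
    field_simp
    ring
  have hF_anti : Antitone F := antitone_of_deriv_nonpos (fun t => (hF t).differentiableAt)
    fun t => (hF t).deriv ▸
      mul_nonpos_of_nonpos_of_nonneg (by linarith [hdecay t]) (Real.exp_nonneg _)
  rcases le_or_gt (E T) (K / α) with hT | hT
  · exact le_max_of_le_right hT
  · refine le_max_of_le_left (sub_le_sub_iff_right (K / α) |>.1 ?_)
    calc E T - K / α ≤ (E T - K / α) * Real.exp (α * (T - a)) :=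
          le_mul_of_one_le_right (by linarith) (Real.one_le_exp (by nlinarith))
      _ = F T := rfl
      _ ≤ F a := hF_anti haT
      _ = E a - K / α := by simp [F]

theorem exists_sub_le_mul_sub_of_hasDerivWithinAt {E : ℝ → ℝ} {e a m : ℝ}
    (hE : HasDerivWithinAt E e (Ioi a) a) (hm : ∀ t, a ≤ t → m ≤ E t) :
    ∃ Q, ∀ T, a < T → E a - E T ≤ Q * (T - a) := by
  have hslope : ∀ᶠ T in 𝓝[>] a, e - 1 < slope E a T :=
    ((hasDerivWithinAt_iff_tendsto_slope' self_notMem_Ioi).1 hE).eventually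
      (lt_mem_nhds (by linarith))
  obtain ⟨u, hau, hu⟩ := mem_nhdsGT_iff_exists_Ioo_subset.1 hslope
  have hau : 0 < u - a := sub_pos.2 hau
  have hEa : 0 ≤ (E a - m) / (u - a) := div_nonneg (by linarith [hm a le_rfl]) hau.le
  refine ⟨max (1 - e) ((E a - m) / (u - a)), fun T haT => ?_⟩
  have hTa : 0 < T - a := sub_pos.2 haT
  rcases lt_or_ge T u with hTu | hTu
  · have hlin : e - 1 < (E T - E a) / (T - a) := by
      simpa [slope_def_field] using hu ⟨haT, hTu⟩
    rw [lt_div_iff₀ hTa] at hlin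
    nlinarith [le_max_left (1 - e) ((E a - m) / (u - a))]
  · calc E a - E T ≤ (E a - m) / (u - a) * (u - a) := by
          rw [div_mul_cancel₀ _ hau.ne']
          linarith [hm T (by linarith)]
      _ ≤ max (1 - e) ((E a - m) / (u - a)) * (T - a) :=
          mul_le_mul (le_max_right _ _) (by linarith) hau.le (hEa.trans (le_max_right _ _))

theorem setIntegral_Ioc_le_of_hasDerivAt {E E' D : ℝ → ℝ} {K a b : ℝ} (hab : a ≤ b)
    (hE : ∀ t, HasDerivAt E (E' t) t) (hD : ∀ t, D t ≤ K - E' t)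
    (hint : IntegrableOn D (Ioc a b)) :
    ∫ t in Ioc a b, D t ≤ K * (b - a) + (E a - E b) := by
  have hG : ∀ t, HasDerivAt (fun s => K * s - E s) (K - E' t) t := fun t =>
    (by simpa using (hasDerivAt_id t).const_mul K : HasDerivAt (K * ·) K t).sub (hE t)
  rw [← intervalIntegral.integral_of_le hab]
  calc ∫ t in a..b, D t ≤ (K * b - E b) - (K * a - E a) :=
        intervalIntegral.integral_le_sub_of_hasDeriv_right_of_le hab
          (fun t _ => (hG t).continuousAt.continuousWithinAt)
          (fun t _ => (hG t).hasDerivWithinAt) (by rwa [integrableOn_Icc_iff_integrableOn_Ioc])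
          (fun t _ => hD t)
    _ = K * (b - a) + (E a - E b) := by ring

theorem real_inner_le_of_norm_le_mul {F : Type*} [NormedAddCommGroup F] [InnerProductSpace ℝ F]
    {ν CP g : ℝ} (hν : 0 < ν) (f w : F) (hw : ‖w‖ ≤ CP * g) :
    ⟪f, w⟫ ≤ ν / 2 * g ^ 2 + CP ^ 2 * ‖f‖ ^ 2 / (2 * ν) := by
  have hyoung : CP * ‖f‖ * g ≤ ν / 2 * g ^ 2 + CP ^ 2 * ‖f‖ ^ 2 / (2 * ν) := by
    rw [add_div' _ _ _ (by positivity), le_div_iff₀ (by positivity)]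
    nlinarith [sq_nonneg (CP * ‖f‖ - ν * g)]
  calc ⟪f, w⟫ ≤ ‖f‖ * ‖w‖ := real_inner_le_norm f w
    _ ≤ ‖f‖ * (CP * g) := mul_le_mul_of_nonneg_left hw (norm_nonneg f)
    _ = CP * ‖f‖ * g := by ring
    _ ≤ _ := hyoung

section SemidiscreteModel

variable {Vh H : Type*} [NormedAddCommGroup Vh]

noncomputable def energy (Ωm : ℝ) (vh : ℝ → Vh) (kh : ℝ → ℝ) (t : ℝ) : ℝ :=
  1 / 2 * ‖vh t‖ ^ 2 + Ωm * kh t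

noncomputable def dissipation [Norm H] (Grad : Vh → H) (ν τ Ωm : ℝ) (vh : ℝ → Vh) (kh : ℝ → ℝ)
    (t : ℝ) : ℝ :=
  ν * ‖Grad (vh t)‖ ^ 2 + Real.sqrt 2 / 2 * τ⁻¹ * Ωm * kh t

theorem hasDerivAt_energy [InnerProductSpace ℝ Vh] [NormedAddCommGroup H] [InnerProductSpace ℝ H]
    {Grad : Vh → H} {b : Vh → Vh → Vh → ℝ} {ν μ τ Ωm t : ℝ} {f : Vh} {vh : ℝ → Vh} {vh' : Vh}
    {kh : ℝ → ℝ}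
    (hΩm : Ωm ≠ 0) (hskew : b (vh t) (vh t) (vh t) = 0) (hvh : HasDerivAt vh vh' t)
    (hmomentum : ⟪vh', vh t⟫ + (ν + μ * τ * kh t) * ⟪Grad (vh t), Grad (vh t)⟫ +
      b (vh t) (vh t) (vh t) = ⟪f, vh t⟫)
    (hkeq : HasDerivAt kh
      ((1 / Ωm) * (μ * τ * kh t * ‖Grad (vh t)‖ ^ 2) - Real.sqrt 2 / 2 * τ⁻¹ * kh t) t) :
    HasDerivAt (energy Ωm vh kh) (⟪f, vh t⟫ - dissipation Grad ν τ Ωm vh kh t) t := by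
  have hkinetic : HasDerivAt (fun s => 1 / 2 * ‖vh s‖ ^ 2) ⟪vh', vh t⟫ t := by
    have h := (hvh.inner ℝ hvh).const_mul (1 / 2 : ℝ)
    simp only [real_inner_self_eq_norm_sq, real_inner_comm vh' (vh t)] at h
    exact h.congr_deriv (by ring)
  rw [hskew, real_inner_self_eq_norm_sq] at hmomentum
  refine (hkinetic.add (hkeq.const_mul Ωm)).congr_deriv ?_
  rw [dissipation, mul_sub, ← mul_assoc, mul_one_div_cancel hΩm, one_mul]
  linear_combination hmomentum

theorem mul_energy_le_half_dissipation [Norm H] {Grad : Vh → H} {ν τ Ωm CP t : ℝ}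
    {vh : ℝ → Vh} {kh : ℝ → ℝ} (hν : 0 ≤ ν) (hCP : CP ≠ 0)
    (hpoincare : ‖vh t‖ ≤ CP * ‖Grad (vh t)‖) (hk : 0 ≤ Ωm * kh t) :
    min (ν / CP ^ 2) (Real.sqrt 2 / 2 * τ⁻¹ / 2) * energy Ωm vh kh t ≤
      dissipation Grad ν τ Ωm vh kh t / 2 := by
  set α := min (ν / CP ^ 2) (Real.sqrt 2 / 2 * τ⁻¹ / 2)
  have hsq : ‖vh t‖ ^ 2 ≤ CP ^ 2 * ‖Grad (vh t)‖ ^ 2 := by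
    rw [← mul_pow]
    exact pow_le_pow_left₀ (norm_nonneg _) hpoincare 2
  have hkinetic : α * ‖vh t‖ ^ 2 ≤ ν * ‖Grad (vh t)‖ ^ 2 :=
    calc α * ‖vh t‖ ^ 2 ≤ ν / CP ^ 2 * (CP ^ 2 * ‖Grad (vh t)‖ ^ 2) :=
          mul_le_mul (min_le_left _ _) hsq (by positivity) (by positivity)
      _ = ν * ‖Grad (vh t)‖ ^ 2 := by field_simp
  have hturbulent : α * (Ωm * kh t) ≤ Real.sqrt 2 / 2 * τ⁻¹ / 2 * (Ωm * kh t) :=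
    mul_le_mul_of_nonneg_right (min_le_right _ _) hk
  rw [energy, dissipation]
  linarith

end SemidiscreteModel

/-- `Vh` is the divergence-free finite element space with the `L²` inner product, `Grad` the
gradient, `b` the skew-symmetric trilinear form, `Ωm = |Ω|` and `CP` a Poincaré constant. -/
theorem semidiscrete_uniform_bounds_general {Vh H : Type*} [NormedAddCommGroup Vh]
    [InnerProductSpace ℝ Vh] [NormedAddCommGroup H] [InnerProductSpace ℝ H]
    (Grad : Vh →ₗ[ℝ] H) (b : Vh → Vh → Vh → ℝ)
    (hskew : ∀ u w : Vh, b u w w = 0)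
    (ν μ τ Ωm CP : ℝ) (hν : 0 < ν) (hτ : 0 < τ) (hΩm : 0 < Ωm)
    (hCP : 0 < CP) (hpoincare : ∀ w : Vh, ‖w‖ ≤ CP * ‖Grad w‖)
    (f : Vh) (vh : ℝ → Vh) (vh' : ℝ → Vh) (kh : ℝ → ℝ)
    (hvh : ∀ t, HasDerivAt vh (vh' t) t)
    (hmomentum : ∀ t, ∀ wh : Vh,
      ⟪vh' t, wh⟫ + (ν + μ * τ * kh t) * ⟪Grad (vh t), Grad wh⟫ +
        b (vh t) (vh t) wh = ⟪f, wh⟫)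
    (hkeq : ∀ t, HasDerivAt kh
      ((1 / Ωm) * (μ * τ * kh t * ‖Grad (vh t)‖ ^ 2) -
        Real.sqrt 2 / 2 * τ⁻¹ * kh t) t)
    (hknonneg : ∀ t, 0 ≤ kh t) :
    ∃ C : ℝ, 0 < C ∧ ∀ T > (0 : ℝ),
      1 / 2 * ‖vh T‖ ^ 2 + Ωm * kh T ≤ C ∧
      (1 / T) * ∫ t in Set.Ioc (0 : ℝ) T,
        (ν * ‖Grad (vh t)‖ ^ 2 + Real.sqrt 2 / 2 * τ⁻¹ * Ωm * kh t) ≤ C := by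
  set E := energy Ωm vh kh
  set D := dissipation Grad ν τ Ωm vh kh
  set K := CP ^ 2 * ‖f‖ ^ 2 / (2 * ν)
  set α := min (ν / CP ^ 2) (Real.sqrt 2 / 2 * τ⁻¹ / 2)
  have hα : 0 < α := lt_min (by positivity) (by positivity)
  have hΩk : ∀ t, 0 ≤ Ωm * kh t := fun t => mul_nonneg hΩm.le (hknonneg t)
  have hE_nonneg : ∀ t, 0 ≤ E t := fun t => add_nonneg (by positivity) (hΩk t)
  have hE : ∀ t, HasDerivAt E (⟪f, vh t⟫ - D t) t := fun t =>
    hasDerivAt_energy hΩm.ne' (hskew _ _) (hvh t) (hmomentum t (vh t)) (hkeq t)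
  have hforcing : ∀ t, ⟪f, vh t⟫ ≤ K + D t / 2 := fun t => by
    have hyoung := real_inner_le_of_norm_le_mul hν f (vh t) (hpoincare (vh t))
    have hturbulent : 0 ≤ Real.sqrt 2 / 2 * τ⁻¹ * Ωm * kh t := by positivity [hknonneg t]
    simp only [D, dissipation]
    linarith
  have hdecay : ∀ t, ⟪f, vh t⟫ - D t ≤ K - α * E t := fun t => by
    linarith [hforcing t,
      mul_energy_le_half_dissipation (τ := τ) hν.le hCP.ne' (hpoincare (vh t)) (hΩk t)]
  obtain ⟨Q, hQ⟩ := exists_sub_le_mul_sub_of_hasDerivWithinAt (hE 0).hasDerivWithinAt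
    fun t _ => hE_nonneg t
  refine ⟨max (max (E 0) (K / α)) (2 * (K + Q)) + 1, by positivity, fun T hT => ⟨?_, ?_⟩⟩
  · exact (le_max_of_hasDerivAt_le_sub_mul hα hE hdecay hT.le).trans
      (by linarith [le_max_left (max (E 0) (K / α)) (2 * (K + Q))])
  · rw [one_div, inv_mul_le_iff₀ hT]
    by_cases hint : IntegrableOn D (Ioc 0 T)
    · have hint_le := setIntegral_Ioc_le_of_hasDerivAt (K := 2 * K) hT.le
        (fun t => (hE t).const_mul 2) (fun t => by linarith [hforcing t]) hint
      change ∫ t in Ioc 0 T, D t ≤ _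
      nlinarith [hQ T hT, le_max_right (max (E 0) (K / α)) (2 * (K + Q))]
    · exact (integral_undef hint).trans_le (by positivity)

/-- Uniform-in-`T` bounds on energy and dissipation rate for the semi-discrete
approximation of the 1/2-equation model. Setting as in the energy equality:
`Vh` is the divergence-free FE space with the `L²` inner product, `Grad` the
gradient operator, `b` the skew-symmetric trilinear form, `Ωm = |Ω|`,
`CP` a Poincaré constant. The constant `C` depends only on the data
`f, v_h(0), k_h(0), ν` (and `Ωm, τ, CP`), not on `T`. -/
theorem semidiscrete_uniform_bounds {Vh H : Type*} [NormedAddCommGroup Vh]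
    [InnerProductSpace ℝ Vh] [NormedAddCommGroup H] [InnerProductSpace ℝ H]
    (Grad : Vh →ₗ[ℝ] H) (b : Vh → Vh → Vh → ℝ)
    (hskew : ∀ u w : Vh, b u w w = 0)
    (ν μ τ Ωm CP : ℝ) (hν : 0 < ν) (hμ : 0 < μ) (hτ : 0 < τ) (hΩm : 0 < Ωm)
    (hCP : 0 < CP) (hpoincare : ∀ w : Vh, ‖w‖ ≤ CP * ‖Grad w‖)
    (f : Vh) (vh : ℝ → Vh) (vh' : ℝ → Vh) (kh : ℝ → ℝ)
    (hvh : ∀ t, HasDerivAt vh (vh' t) t)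
    (hmomentum : ∀ t, ∀ wh : Vh,
      ⟪vh' t, wh⟫ + (ν + μ * τ * kh t) * ⟪Grad (vh t), Grad wh⟫ +
        b (vh t) (vh t) wh = ⟪f, wh⟫)
    (hkeq : ∀ t, HasDerivAt kh
      ((1 / Ωm) * (μ * τ * kh t * ‖Grad (vh t)‖ ^ 2) -
        Real.sqrt 2 / 2 * τ⁻¹ * kh t) t)
    (hknonneg : ∀ t, 0 ≤ kh t) :
    ∃ C : ℝ, 0 < C ∧ ∀ T > (0 : ℝ),
      1 / 2 * ‖vh T‖ ^ 2 + Ωm * kh T ≤ C ∧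
      (1 / T) * ∫ t in Set.Ioc (0 : ℝ) T,
        (ν * ‖Grad (vh t)‖ ^ 2 + Real.sqrt 2 / 2 * τ⁻¹ * Ωm * kh t) ≤ C :=
  semidiscrete_uniform_bounds_general Grad b hskew ν μ τ Ωm CP hν hτ hΩm hCP hpoincare f vh vh' kh
    hvh hmomentum hkeq hknonneg
end

section
/- The backward Euler fully-discrete scheme for the 1/2-equation model is unconditionally stable: for all N and any Δt > 0, ‖v_h^N‖² + 2|Ω|k_h^N + Δt Σ_{n=0}^{N−1}(ν‖∇v_h^{n+1}‖² + √2 τ⁻¹|Ω|k_h^{n+1}) + Σ_{n=0}^{N−1}‖v_h^{n+1} − v_h^n‖² ≤ CΔt Σ_{n=0}^{N−1}‖f^{n+1}‖² + ‖v_h^0‖² + 2|Ω|k_h^0. -/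
open RealInnerProductSpace Finset

/-!
Test the momentum equation with `v_h^{n+1}`: skew-symmetry kills the convection term and the
polarization identity `2⟪u - v, u⟫ = ‖u‖² - ‖v‖² + ‖u - v‖²` turns the time difference into a
difference of kinetic energies plus numerical dissipation. Multiplying the `k`-equation by
`2|Ω|Δt` produces exactly the turbulent-viscosity term `2Δt μτ k_h^n ‖∇v_h^{n+1}‖²` with the
opposite sign, so the two cancel when the equations are added.
The forcing is absorbed by Cauchy–Schwarz, Poincaré and Young, and summing the one-step
estimate over `n` telescopes.
-/

section InnerProduct

variable {V H : Type*} [NormedAddCommGroup V] [InnerProductSpace ℝ V]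

theorem two_inner_sub_self_eq (u v : V) :
    2 * ⟪u - v, u⟫ = ‖u‖ ^ 2 - ‖v‖ ^ 2 + ‖u - v‖ ^ 2 := by
  rw [norm_sub_sq_real, inner_sub_left, real_inner_self_eq_norm_sq, real_inner_comm]
  ring

theorem two_inner_le_of_poincare [NormedAddCommGroup H] {G : V → H} {CP ν : ℝ}
    (hpoincare : ∀ w, ‖w‖ ≤ CP * ‖G w‖) (hν : 0 < ν) (f w : V) :
    2 * ⟪f, w⟫ ≤ CP ^ 2 / ν * ‖f‖ ^ 2 + ν * ‖G w‖ ^ 2 :=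
  calc 2 * ⟪f, w⟫ ≤ 2 * (‖f‖ * (CP * ‖G w‖)) := by
        gcongr
        exact (real_inner_le_norm f w).trans
          (mul_le_mul_of_nonneg_left (hpoincare w) (norm_nonneg f))
    _ = 2 * ‖G w‖ * (CP * ‖f‖) := by ring
    _ ≤ ν * ‖G w‖ ^ 2 + ν⁻¹ * (CP * ‖f‖) ^ 2 := two_mul_le_add_mul_sq hν
    _ = CP ^ 2 / ν * ‖f‖ ^ 2 + ν * ‖G w‖ ^ 2 := by ring

end InnerProduct

theorem add_sum_range_le_of_succ_le {a d g : ℕ → ℝ} (h : ∀ n, a (n + 1) + d n ≤ a n + g n)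
    (N : ℕ) : a N + ∑ n ∈ range N, d n ≤ a 0 + ∑ n ∈ range N, g n := by
  induction N with
  | zero => simp
  | succ N ih =>
    rw [sum_range_succ, sum_range_succ]
    linarith [h N]

section Scheme

variable {V H : Type*} [NormedAddCommGroup V] [InnerProductSpace ℝ V]
  [NormedAddCommGroup H] [InnerProductSpace ℝ H]
  {Grad : V →ₗ[ℝ] H} {b : V → V → V → ℝ} {ν μ τ Ωm Δt : ℝ} {f v v' : V} {k k' : ℝ}

theorem momentum_energy_eq (hskew : ∀ u w : V, b u w w = 0) (hΔt : Δt ≠ 0)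
    (hmom : ∀ w : V, ⟪Δt⁻¹ • (v' - v), w⟫ + (ν + μ * τ * k) * ⟪Grad v', Grad w⟫ +
      b v v' w = ⟪f, w⟫) :
    ‖v'‖ ^ 2 - ‖v‖ ^ 2 + ‖v' - v‖ ^ 2 + 2 * Δt * ((ν + μ * τ * k) * ‖Grad v'‖ ^ 2) =
      Δt * (2 * ⟪f, v'⟫) := by
  have h := hmom v'
  rw [hskew, real_inner_smul_left, real_inner_self_eq_norm_sq, add_zero] at h
  rw [← two_inner_sub_self_eq, ← h]
  field_simp

theorem turbulent_energy_eq (hΩm : Ωm ≠ 0) (hΔt : Δt ≠ 0)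
    (hk : (k' - k) / Δt + Real.sqrt 2 / 2 * τ⁻¹ * k' =
      (1 / Ωm) * (μ * τ * k * ‖Grad v'‖ ^ 2)) :
    2 * Ωm * (k' - k) + Δt * (Real.sqrt 2 * τ⁻¹ * Ωm * k') =
      2 * Δt * (μ * τ * k * ‖Grad v'‖ ^ 2) := by
  field_simp at hk
  linear_combination hk

theorem energy_step_le {CP : ℝ} (hskew : ∀ u w : V, b u w w = 0) (hν : 0 < ν)
    (hΩm : Ωm ≠ 0) (hΔt : 0 < Δt) (hpoincare : ∀ w : V, ‖w‖ ≤ CP * ‖Grad w‖)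
    (hmom : ∀ w : V, ⟪Δt⁻¹ • (v' - v), w⟫ + (ν + μ * τ * k) * ⟪Grad v', Grad w⟫ +
      b v v' w = ⟪f, w⟫)
    (hk : (k' - k) / Δt + Real.sqrt 2 / 2 * τ⁻¹ * k' =
      (1 / Ωm) * (μ * τ * k * ‖Grad v'‖ ^ 2)) :
    ‖v'‖ ^ 2 + 2 * Ωm * k' + Δt * (ν * ‖Grad v'‖ ^ 2 + Real.sqrt 2 * τ⁻¹ * Ωm * k') +
        ‖v' - v‖ ^ 2 ≤
      ‖v‖ ^ 2 + 2 * Ωm * k + CP ^ 2 / ν * Δt * ‖f‖ ^ 2 := by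
  have hforce := mul_le_mul_of_nonneg_left
    (two_inner_le_of_poincare hpoincare hν f v') hΔt.le
  linarith [momentum_energy_eq hskew hΔt.ne' hmom, turbulent_energy_eq hΩm hΔt.ne' hk]

end Scheme

theorem backward_euler_unconditional_stability_general {Vh H : Type*}
    [NormedAddCommGroup Vh] [InnerProductSpace ℝ Vh] [NormedAddCommGroup H]
    [InnerProductSpace ℝ H]
    (Grad : Vh →ₗ[ℝ] H) (b : Vh → Vh → Vh → ℝ)
    (hskew : ∀ u w : Vh, b u w w = 0)
    (ν μ τ Ωm CP Δt : ℝ) (hν : 0 < ν)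
    (hΩm : 0 < Ωm) (hCP : 0 < CP) (hΔt : 0 < Δt)
    (hpoincare : ∀ w : Vh, ‖w‖ ≤ CP * ‖Grad w‖)
    (f : ℕ → Vh) (vh : ℕ → Vh) (kh : ℕ → ℝ)
    (hmomentum : ∀ n : ℕ, ∀ wh : Vh,
      ⟪(Δt)⁻¹ • (vh (n + 1) - vh n), wh⟫ +
        (ν + μ * τ * kh n) * ⟪Grad (vh (n + 1)), Grad wh⟫ +
        b (vh n) (vh (n + 1)) wh = ⟪f (n + 1), wh⟫)
    (hkeq : ∀ n : ℕ,
      (kh (n + 1) - kh n) / Δt + Real.sqrt 2 / 2 * τ⁻¹ * kh (n + 1) =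
        (1 / Ωm) * (μ * τ * kh n * ‖Grad (vh (n + 1))‖ ^ 2)) :
    ∃ C : ℝ, 0 < C ∧ ∀ N : ℕ,
      ‖vh N‖ ^ 2 + 2 * Ωm * kh N +
        Δt * ∑ n ∈ range N,
          (ν * ‖Grad (vh (n + 1))‖ ^ 2 + Real.sqrt 2 * τ⁻¹ * Ωm * kh (n + 1)) +
        ∑ n ∈ range N, ‖vh (n + 1) - vh n‖ ^ 2 ≤
      C * Δt * ∑ n ∈ range N, ‖f (n + 1)‖ ^ 2 + ‖vh 0‖ ^ 2 + 2 * Ωm * kh 0 := by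
  refine ⟨CP ^ 2 / ν, by positivity, fun N => ?_⟩
  have htele := add_sum_range_le_of_succ_le
    (a := fun n => ‖vh n‖ ^ 2 + 2 * Ωm * kh n)
    (d := fun n => Δt * (ν * ‖Grad (vh (n + 1))‖ ^ 2 +
      Real.sqrt 2 * τ⁻¹ * Ωm * kh (n + 1)) + ‖vh (n + 1) - vh n‖ ^ 2)
    (g := fun n => CP ^ 2 / ν * Δt * ‖f (n + 1)‖ ^ 2)
    (fun n => by
      linarith [energy_step_le hskew hν hΩm.ne' hΔt hpoincare (hmomentum n) (hkeq n)]) N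
  simp only [sum_add_distrib, ← mul_sum] at htele ⊢
  linarith

/-- Unconditional stability of the backward Euler fully discrete scheme for the
1/2-equation model. `Vh` is the divergence-free FE space with `L²` inner
product, `Grad` the gradient operator, `b` the skew-symmetric trilinear form,
`Ωm = |Ω|`, `CP` a Poincaré constant, and `(v_h^n, k_h^n)` solves the scheme.
The constant `C` depends only on `ν` and the Poincaré constant. -/
theorem backward_euler_unconditional_stability {Vh H : Type*}
    [NormedAddCommGroup Vh] [InnerProductSpace ℝ Vh] [NormedAddCommGroup H]
    [InnerProductSpace ℝ H]
    (Grad : Vh →ₗ[ℝ] H) (b : Vh → Vh → Vh → ℝ)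
    (hskew : ∀ u w : Vh, b u w w = 0)
    (ν μ τ Ωm CP Δt : ℝ) (hν : 0 < ν) (hμ : 0 < μ) (hτ : 0 < τ)
    (hΩm : 0 < Ωm) (hCP : 0 < CP) (hΔt : 0 < Δt)
    (hpoincare : ∀ w : Vh, ‖w‖ ≤ CP * ‖Grad w‖)
    (f : ℕ → Vh) (vh : ℕ → Vh) (kh : ℕ → ℝ) (hk0 : 0 ≤ kh 0)
    (hmomentum : ∀ n : ℕ, ∀ wh : Vh,
      ⟪(Δt)⁻¹ • (vh (n + 1) - vh n), wh⟫ +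
        (ν + μ * τ * kh n) * ⟪Grad (vh (n + 1)), Grad wh⟫ +
        b (vh n) (vh (n + 1)) wh = ⟪f (n + 1), wh⟫)
    (hkeq : ∀ n : ℕ,
      (kh (n + 1) - kh n) / Δt + Real.sqrt 2 / 2 * τ⁻¹ * kh (n + 1) =
        (1 / Ωm) * (μ * τ * kh n * ‖Grad (vh (n + 1))‖ ^ 2)) :
    ∃ C : ℝ, 0 < C ∧ ∀ N : ℕ,
      ‖vh N‖ ^ 2 + 2 * Ωm * kh N +
        Δt * ∑ n ∈ range N,
          (ν * ‖Grad (vh (n + 1))‖ ^ 2 + Real.sqrt 2 * τ⁻¹ * Ωm * kh (n + 1)) +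
        ∑ n ∈ range N, ‖vh (n + 1) - vh n‖ ^ 2 ≤
      C * Δt * ∑ n ∈ range N, ‖f (n + 1)‖ ^ 2 + ‖vh 0‖ ^ 2 + 2 * Ωm * kh 0 :=
  backward_euler_unconditional_stability_general Grad b hskew ν μ τ Ωm CP Δt hν hΩm hCP hΔt
    hpoincare f vh kh hmomentum hkeq
end

section
/- If k_h^0 ≥ 0 in the fully discrete scheme, then k_h^n ≥ 0 for all n ≥ 0. Explicitly, k_h^{n+1} = (k_h^n + Δt·μτ k_h^n ‖∇v_h^{n+1}‖²/|Ω|)/(1 + (√2/2)τ⁻¹Δt), which is nonnegative whenever k_h^n ≥ 0. -/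
/-! The backward Euler step `(y - x)/Δt + a y = c x` is linear in `y` and solves to
`y = (1 + Δt c) x / (1 + a Δt)`. With `a, c ≥ 0` both the amplification factor `1 + Δt c` and
the damping factor `1 + a Δt` are positive, so the step maps `x ≥ 0` to `y ≥ 0`. -/

section BackwardEuler

variable {Δt a c x y : ℝ}

theorem backwardEuler_step_eq (hΔt : Δt ≠ 0) (hden : 1 + a * Δt ≠ 0)
    (h : (y - x) / Δt + a * y = c * x) : y = (x + Δt * c * x) / (1 + a * Δt) := by
  rw [eq_div_iff hden]
  field_simp at h
  linear_combination h

theorem backwardEuler_step_nonneg (hΔt : 0 < Δt) (ha : 0 ≤ a) (hc : 0 ≤ c) (hx : 0 ≤ x)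
    (h : (y - x) / Δt + a * y = c * x) : 0 ≤ y := by
  have hden : 0 < 1 + a * Δt := by positivity
  rw [backwardEuler_step_eq hΔt.ne' hden.ne' h]
  positivity

end BackwardEuler

theorem backwardEuler_nonneg {Δt a : ℝ} {c x : ℕ → ℝ} (hΔt : 0 < Δt) (ha : 0 ≤ a)
    (hc : ∀ n, 0 ≤ c n) (h : ∀ n, (x (n + 1) - x n) / Δt + a * x (n + 1) = c n * x n)
    (h0 : 0 ≤ x 0) (n : ℕ) : 0 ≤ x n := by
  induction n with
  | zero => exact h0
  | succ n ih => exact backwardEuler_step_nonneg hΔt ha (hc n) ih (h n)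

/-- Nonnegativity of `k_h^n` in the backward Euler k-equation: here `g (n+1)`
stands for `‖∇v_h^{n+1}‖² ≥ 0`. If `k_h^0 ≥ 0` then `k_h^n ≥ 0` for all `n`,
and explicitly
`k_h^{n+1} = (k_h^n + Δt μτ k_h^n g^{n+1}/|Ω|)/(1 + (√2/2)τ⁻¹Δt)`. -/
theorem kh_nonneg (Δt τ μ Ωm : ℝ) (hΔt : 0 < Δt) (hτ : 0 < τ) (hμ : 0 < μ)
    (hΩm : 0 < Ωm) (kh : ℕ → ℝ) (g : ℕ → ℝ) (hg : ∀ n, 0 ≤ g n)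
    (hkeq : ∀ n : ℕ,
      (kh (n + 1) - kh n) / Δt + Real.sqrt 2 / 2 * τ⁻¹ * kh (n + 1) =
        μ * τ / Ωm * kh n * g (n + 1))
    (hk0 : 0 ≤ kh 0) :
    (∀ n : ℕ, 0 ≤ kh n) ∧
    ∀ n : ℕ, kh (n + 1) =
      (kh n + Δt * μ * τ * kh n * g (n + 1) / Ωm) /
        (1 + Real.sqrt 2 / 2 * τ⁻¹ * Δt) := by
  set a := Real.sqrt 2 / 2 * τ⁻¹
  set c : ℕ → ℝ := fun n ↦ μ * τ / Ωm * g (n + 1)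
  have ha : 0 ≤ a := by positivity
  have hc : ∀ n, 0 ≤ c n := fun n ↦ by have := hg (n + 1); positivity
  have heq : ∀ n, (kh (n + 1) - kh n) / Δt + a * kh (n + 1) = c n * kh n := fun n ↦ by
    rw [hkeq n]; ring
  refine ⟨backwardEuler_nonneg hΔt ha hc heq hk0, fun n ↦ ?_⟩
  rw [backwardEuler_step_eq hΔt.ne' (by positivity) (heq n)]
  ring
end
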